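/- arXiv:1105.4490 — 4 statements merged into one kernel-verified Lean document; each statement's English description precedes it below -/
import Mathlib

section
/- If a nonempty finite weighted hypergraph G is disconnected, then the energy function f attains no minimum on U: for every (x_1,...,x_k) ∈ U there exists (y_1,...,y_k) ∈ U with f(y_1,...,y_k) < f(x_1,...,x_k). -/
open Finset in
/-- The energy function of a weighted hypergraph. -/
noncomputable def hyperEnergy {k l d : ℕ} (e : Fin l → Finset (Fin k))
    (c : Fin l → ℝ) (w : Fin k → ℝ) (α β γ δ : ℝ)
    (x : Fin k → EuclideanSpace ℝ (Fin d)) : ℝ :=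
  α / 2 * ∑ j, c j * ∑ i ∈ e j,
      ‖x i - ((e j).card : ℝ)⁻¹ • ∑ i' ∈ e j, x i'‖ ^ γ
  + β / 2 * ∑ j : Fin k, ∑ i ∈ univ.erase j, w i * w j / ‖x i - x j‖ ^ δ

/-!
Translate one side `s` of the cut by a vector `v` longer than twice every distance in the
layout. Every hyperedge lies on one side, so it moves rigidly and its attraction term does not
change. Distances within a side do not change either, while distances across the cut grow, so
no repulsion term increases and the terms of a pair across the cut decrease strictly.
-/

open Finset

theorem sub_inv_card_smul_sum_add_const {ι E : Type*} [AddCommGroup E] [Module ℝ E]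
    {t : Finset ι} {x y : ι → E} {v : E} (hxy : ∀ i ∈ t, y i = x i + v) {i : ι} (hi : i ∈ t) :
    y i - (#t : ℝ)⁻¹ • ∑ i' ∈ t, y i' = x i - (#t : ℝ)⁻¹ • ∑ i' ∈ t, x i' := by
  have hcard : (#t : ℝ) ≠ 0 := by exact_mod_cast (card_pos.mpr ⟨i, hi⟩).ne'
  rw [hxy i hi, sum_congr rfl hxy, sum_add_distrib, sum_const, ← Nat.cast_smul_eq_nsmul ℝ,
    smul_add, smul_smul, inv_mul_cancel₀ hcard, one_smul]
  abel

theorem norm_lt_norm_add_of_two_mul_lt {E : Type*} [SeminormedAddCommGroup E] {a b : E}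
    (h : 2 * ‖a‖ < ‖b‖) : ‖a‖ < ‖a + b‖ := by
  have := norm_sub_norm_le b (-a)
  rw [norm_neg, sub_neg_eq_add, add_comm] at this
  linarith

theorem exists_two_mul_norm_sub_lt_norm {ι E : Type*} [Finite ι] [NormedAddCommGroup E]
    [NormedSpace ℝ E] [Nontrivial E] (x : ι → E) : ∃ v : E, ∀ i j, 2 * ‖x i - x j‖ < ‖v‖ := by
  obtain ⟨M, hM⟩ := Finite.exists_le fun p : ι × ι => 2 * ‖x p.1 - x p.2‖
  obtain ⟨v, hv⟩ := NormedSpace.exists_lt_norm ℝ E M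
  exact ⟨v, fun i j => (hM (i, j)).trans_lt hv⟩

theorem sum_sum_erase_div_rpow_norm_sub_lt {ι E : Type*} [Fintype ι] [DecidableEq ι]
    [NormedAddCommGroup E] {w : ι → ℝ} (hw : ∀ i, 0 < w i) {δ : ℝ} (hδ : 0 < δ)
    {x y : ι → E} (hx : Function.Injective x) (hle : ∀ i j, ‖x i - x j‖ ≤ ‖y i - y j‖)
    {i₀ j₀ : ι} (hne : i₀ ≠ j₀) (hlt : ‖x i₀ - x j₀‖ < ‖y i₀ - y j₀‖) :
    ∑ j, ∑ i ∈ univ.erase j, w i * w j / ‖y i - y j‖ ^ δ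
      < ∑ j, ∑ i ∈ univ.erase j, w i * w j / ‖x i - x j‖ ^ δ := by
  have hpos : ∀ i j, i ≠ j → 0 < ‖x i - x j‖ ^ δ := fun i j h =>
    Real.rpow_pos_of_pos (norm_pos_iff.mpr (sub_ne_zero.mpr (hx.ne h))) δ
  have hterm : ∀ j, ∀ i ∈ univ.erase j,
      w i * w j / ‖y i - y j‖ ^ δ ≤ w i * w j / ‖x i - x j‖ ^ δ := fun j i hi =>
    div_le_div_of_nonneg_left (mul_pos (hw i) (hw j)).le (hpos i j (ne_of_mem_erase hi))
      (Real.rpow_le_rpow (norm_nonneg _) (hle i j) hδ.le)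
  refine sum_lt_sum (fun j _ => sum_le_sum (hterm j)) ⟨j₀, mem_univ _, ?_⟩
  refine sum_lt_sum (hterm j₀) ⟨i₀, mem_erase.mpr ⟨hne, mem_univ _⟩, ?_⟩
  exact div_lt_div_of_pos_left (mul_pos (hw i₀) (hw j₀)) (hpos i₀ j₀ hne)
    (Real.rpow_lt_rpow (norm_nonneg _) hlt hδ)

section Shift

variable {ι E : Type*} [DecidableEq ι]

def shiftOn [AddCommGroup E] (s : Finset ι) (v : E) (x : ι → E) : ι → E :=
  fun i => x i + if i ∈ s then v else 0

theorem sum_norm_sub_centroid_shiftOn [AddCommGroup E] [Module ℝ E] [Norm E]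
    {s t : Finset ι} (ht : t ⊆ s ∨ Disjoint t s) (v : E) (x : ι → E) (γ : ℝ) :
    ∑ i ∈ t, ‖shiftOn s v x i - (#t : ℝ)⁻¹ • ∑ i' ∈ t, shiftOn s v x i'‖ ^ γ
      = ∑ i ∈ t, ‖x i - (#t : ℝ)⁻¹ • ∑ i' ∈ t, x i'‖ ^ γ := by
  obtain ⟨u, hu⟩ : ∃ u : E, ∀ i ∈ t, shiftOn s v x i = x i + u := by
    rcases ht with hts | hts
    · exact ⟨v, fun i hi => by simp [shiftOn, hts hi]⟩
    · exact ⟨0, fun i hi => by simp [shiftOn, disjoint_left.mp hts hi]⟩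
  exact sum_congr rfl fun i hi => by rw [sub_inv_card_smul_sum_add_const hu hi]

variable [SeminormedAddCommGroup E] {s : Finset ι} {v : E} {x : ι → E}

theorem shiftOn_sub_shiftOn_of_mem_iff {i j : ι} (h : i ∈ s ↔ j ∈ s) :
    shiftOn s v x i - shiftOn s v x j = x i - x j := by
  by_cases hi : i ∈ s
  · simp [shiftOn, hi, h.mp hi]
  · simp [shiftOn, hi, h.not.mp hi]

theorem norm_sub_lt_norm_shiftOn_sub (hv : ∀ i j, 2 * ‖x i - x j‖ < ‖v‖) {i j : ι}
    (h : ¬(i ∈ s ↔ j ∈ s)) : ‖x i - x j‖ < ‖shiftOn s v x i - shiftOn s v x j‖ := by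
  by_cases hi : i ∈ s
  · have hj : j ∉ s := fun hj => h (iff_of_true hi hj)
    have heq : shiftOn s v x i - shiftOn s v x j = (x i - x j) + v := by
      simp only [shiftOn, if_pos hi, if_neg hj]; abel
    exact heq ▸ norm_lt_norm_add_of_two_mul_lt (hv i j)
  · have hj : j ∈ s := by_contra fun hj => h (iff_of_false hi hj)
    have heq : shiftOn s v x i - shiftOn s v x j = (x i - x j) + -v := by
      simp only [shiftOn, if_neg hi, if_pos hj]; abel
    exact heq ▸ norm_lt_norm_add_of_two_mul_lt ((norm_neg v).symm ▸ hv i j)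

theorem norm_sub_le_norm_shiftOn_sub (hv : ∀ i j, 2 * ‖x i - x j‖ < ‖v‖) (i j : ι) :
    ‖x i - x j‖ ≤ ‖shiftOn s v x i - shiftOn s v x j‖ := by
  by_cases h : i ∈ s ↔ j ∈ s
  · rw [shiftOn_sub_shiftOn_of_mem_iff h]
  · exact (norm_sub_lt_norm_shiftOn_sub hv h).le

theorem shiftOn_injective {E : Type*} [NormedAddCommGroup E] {s : Finset ι} {v : E}
    {x : ι → E} (hx : Function.Injective x) (hv : ∀ i j, 2 * ‖x i - x j‖ < ‖v‖) :
    Function.Injective (shiftOn s v x) := by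
  intro i j hij
  have := norm_sub_le_norm_shiftOn_sub (s := s) hv i j
  rw [hij, sub_self, norm_zero, norm_le_zero_iff, sub_eq_zero] at this
  exact hx this

end Shift

theorem hyperEnergy_shiftOn_lt {k l d : ℕ} {e : Fin l → Finset (Fin k)} (c : Fin l → ℝ)
    {w : Fin k → ℝ} (α : ℝ) {β : ℝ} (γ : ℝ) {δ : ℝ} (hw : ∀ i, 0 < w i) (hβ : 0 < β)
    (hδ : 0 < δ) {s : Finset (Fin k)} (hsplit : ∀ j, e j ⊆ s ∨ Disjoint (e j) s)
    {v : EuclideanSpace ℝ (Fin d)} {x : Fin k → EuclideanSpace ℝ (Fin d)}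
    (hx : Function.Injective x) (hv : ∀ i j, 2 * ‖x i - x j‖ < ‖v‖)
    {i₀ j₀ : Fin k} (hi₀ : i₀ ∉ s) (hj₀ : j₀ ∈ s) :
    hyperEnergy e c w α β γ δ (shiftOn s v x) < hyperEnergy e c w α β γ δ x := by
  have hrep := sum_sum_erase_div_rpow_norm_sub_lt hw hδ hx (norm_sub_le_norm_shiftOn_sub hv)
    (ne_of_mem_of_not_mem hj₀ hi₀).symm (norm_sub_lt_norm_shiftOn_sub hv fun h => hi₀ (h.mpr hj₀))
  unfold hyperEnergy
  simp only [sum_norm_sub_centroid_shiftOn (hsplit _)]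
  gcongr

theorem hyperEnergy_no_min_of_disconnected_general {k l d : ℕ} (hd : 3 ≤ d)
    (e : Fin l → Finset (Fin k))
    (c : Fin l → ℝ) (w : Fin k → ℝ) (α β γ δ : ℝ)
    (hw : ∀ i, 0 < w i)
    (hβ : 0 < β) (hδ : 0 < δ)
    (V₁ V₂ : Finset (Fin k)) (hdisj : Disjoint V₁ V₂)
    (hV₁ : V₁.Nonempty) (hV₂ : V₂.Nonempty)
    (hsplit : ∀ j, e j ⊆ V₁ ∨ e j ⊆ V₂) :
    ∀ x : Fin k → EuclideanSpace ℝ (Fin d), Function.Injective x →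
      ∃ y : Fin k → EuclideanSpace ℝ (Fin d), Function.Injective y ∧
        hyperEnergy e c w α β γ δ y < hyperEnergy e c w α β γ δ x := by
  intro x hx
  have : Nonempty (Fin d) := ⟨⟨0, by omega⟩⟩
  obtain ⟨v, hv⟩ := exists_two_mul_norm_sub_lt_norm x
  obtain ⟨i₀, hi₀⟩ := hV₁
  obtain ⟨j₀, hj₀⟩ := hV₂
  have hsplit₂ : ∀ j, e j ⊆ V₂ ∨ Disjoint (e j) V₂ := fun j =>
    (hsplit j).symm.imp_right fun h => hdisj.mono_left h
  exact ⟨shiftOn V₂ v x, shiftOn_injective hx hv,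
    hyperEnergy_shiftOn_lt c α γ hw hβ hδ hsplit₂ hx hv (disjoint_left.mp hdisj hi₀) hj₀⟩

/-- If a nonempty finite weighted hypergraph is disconnected
(its vertex set splits into two disjoint nonempty parts such that every hyperedge is
contained in one of the parts), then the energy function attains no minimum on `U`:
every layout of pairwise distinct points can be strictly improved. -/
theorem hyperEnergy_no_min_of_disconnected {k l d : ℕ} (hk : 1 ≤ k) (hd : 3 ≤ d)
    (e : Fin l → Finset (Fin k)) (he : ∀ j, (e j).Nonempty)
    (c : Fin l → ℝ) (w : Fin k → ℝ) (α β γ δ : ℝ)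
    (hc : ∀ j, 0 < c j) (hw : ∀ i, 0 < w i)
    (hα : 0 < α) (hβ : 0 < β) (hγ : 0 < γ) (hδ : 0 < δ)
    (V₁ V₂ : Finset (Fin k)) (hV : V₁ ∪ V₂ = Finset.univ) (hdisj : Disjoint V₁ V₂)
    (hV₁ : V₁.Nonempty) (hV₂ : V₂.Nonempty)
    (hsplit : ∀ j, e j ⊆ V₁ ∨ e j ⊆ V₂) :
    ∀ x : Fin k → EuclideanSpace ℝ (Fin d), Function.Injective x →
      ∃ y : Fin k → EuclideanSpace ℝ (Fin d), Function.Injective y ∧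
        hyperEnergy e c w α β γ δ y < hyperEnergy e c w α β γ δ x :=
  hyperEnergy_no_min_of_disconnected_general hd e c w α β γ δ hw hβ hδ V₁ V₂ hdisj hV₁ hV₂ hsplit
end

section
/- If the points (x_1,...,x_k) ∈ U of a connected hypergraph's layout satisfy max_{i<j} ‖x_i − x_j‖ ≥ R, then the energy is bounded below by a power of R: f(x_1,...,x_k) ≥ (α / (2 (2l)^γ)) · (min_j c_j) · R^γ, where l is the number of hyperedges. -/
/-- A hypergraph on `Fin k` with hyperedges `e j` is connected if every partition of the
vertices into two disjoint nonempty parts is crossed by some hyperedge. -/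
def FinHyperConnected {k l : ℕ} (e : Fin l → Finset (Fin k)) : Prop :=
  ∀ V₁ V₂ : Finset (Fin k), V₁ ∪ V₂ = Finset.univ → Disjoint V₁ V₂ →
    V₁.Nonempty → V₂.Nonempty →
      ∃ j, (e j ∩ V₁).Nonempty ∧ (e j ∩ V₂).Nonempty

open Finset in
/-- Growth lemma: if every two points in a common hyperedge are within `2r` of each other,
then (by connectivity) every point is within `2rl` of a fixed point `i0`. -/
lemma reach_aux {k l d : ℕ} (e : Fin l → Finset (Fin k))
    (hconn : FinHyperConnected e)
    (x : Fin k → EuclideanSpace ℝ (Fin d)) (r : ℝ) (hr : 0 < r)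
    (hsmall : ∀ j, ∀ i ∈ e j, ∀ i' ∈ e j, ‖x i - x i'‖ < 2 * r)
    (i0 : Fin k) :
    ∀ n (T : Finset (Fin l)) (V : Finset (Fin k)), l - T.card ≤ n → i0 ∈ V →
      (∀ j ∈ T, e j ⊆ V) →
      (∀ i ∈ V, i = i0 ∨ ‖x i - x i0‖ < 2 * r * T.card) →
      ∀ i : Fin k, i = i0 ∨ ‖x i - x i0‖ < 2 * r * l := by
  intro n
  induction n with
  | zero =>
    intro T V hn hi0 hT hinv i
    by_cases hV : V = univ
    · rcases hinv i (hV ▸ mem_univ i) with h | h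
      · exact Or.inl h
      · right
        have hcard : (T.card : ℝ) ≤ l := by
          exact_mod_cast (Finset.card_le_univ T).trans_eq (by simp)
        nlinarith
    · exfalso
      obtain ⟨i2, hi2⟩ : Vᶜ.Nonempty := by
        by_contra hemp
        rw [Finset.not_nonempty_iff_eq_empty, Finset.compl_eq_empty_iff] at hemp
        exact hV hemp
      obtain ⟨j, _, ⟨a, ha⟩⟩ := hconn V Vᶜ (by simp) disjoint_compl_right ⟨i0, hi0⟩ ⟨i2, hi2⟩
      rw [mem_inter, mem_compl] at ha
      have hjT : j ∉ T := fun h => ha.2 (hT j h ha.1)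
      have hTne : T ≠ univ := fun h => hjT (h ▸ mem_univ j)
      have := Finset.card_lt_card (Finset.ssubset_univ_iff.mpr hTne)
      simp only [card_univ, Fintype.card_fin] at this
      omega
  | succ n ih =>
    intro T V hn hi0 hT hinv i
    by_cases hV : V = univ
    · rcases hinv i (hV ▸ mem_univ i) with h | h
      · exact Or.inl h
      · right
        have hcard : (T.card : ℝ) ≤ l := by
          exact_mod_cast (Finset.card_le_univ T).trans_eq (by simp)
        nlinarith
    · obtain ⟨i2, hi2⟩ : Vᶜ.Nonempty := by
        by_contra hemp
        rw [Finset.not_nonempty_iff_eq_empty, Finset.compl_eq_empty_iff] at hemp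
        exact hV hemp
      obtain ⟨j, ⟨i1, hi1⟩, ⟨a, ha⟩⟩ :=
        hconn V Vᶜ (by simp) disjoint_compl_right ⟨i0, hi0⟩ ⟨i2, hi2⟩
      rw [mem_inter] at hi1
      rw [mem_inter, mem_compl] at ha
      have hjT : j ∉ T := fun h => ha.2 (hT j h ha.1)
      have hcardT : (insert j T).card = T.card + 1 := card_insert_of_notMem hjT
      have hTlt : T.card < l := by
        have hTne : T ≠ univ := fun h => hjT (h ▸ mem_univ j)
        have := Finset.card_lt_card (Finset.ssubset_univ_iff.mpr hTne)
        simpa using this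
      refine ih (insert j T) (V ∪ e j) (by omega) (mem_union_left _ hi0) ?_ ?_ i
      · intro j' hj'
        rcases mem_insert.mp hj' with h | h
        · exact h ▸ subset_union_right
        · exact (hT j' h).trans subset_union_left
      · intro i' hi'
        rw [hcardT]
        push_cast
        rcases mem_union.mp hi' with h | h
        · rcases hinv i' h with h2 | h2
          · exact Or.inl h2
          · right
            have : (0:ℝ) ≤ T.card := Nat.cast_nonneg _
            linarith
        · by_cases hii : i' = i0
          · exact Or.inl hii
          · right
            have h1 : ‖x i' - x i1‖ < 2 * r := hsmall j i' h i1 hi1.1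
            have htri : ‖x i' - x i0‖ ≤ ‖x i' - x i1‖ + ‖x i1 - x i0‖ := by
              have := dist_triangle (x i') (x i1) (x i0)
              simpa [dist_eq_norm] using this
            rcases hinv i1 hi1.2 with h2 | h2
            · subst h2
              simp only [sub_self, norm_zero] at htri
              nlinarith [Nat.cast_nonneg (α := ℝ) T.card]
            · nlinarith [Nat.cast_nonneg (α := ℝ) T.card]

open Finset in
/-- If the points of a connected hypergraph layout satisfy
`max_{i<j} ‖x_i − x_j‖ ≥ R`, then the energy is bounded below by
`f(x) ≥ (α / (2 (2l)^γ)) (min_j c_j) R^γ`. -/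
theorem hyperEnergy_lower_bound_of_spread {k l d : ℕ} (hk : 2 ≤ k) (hl : 0 < l)
    (hd : 3 ≤ d)
    (e : Fin l → Finset (Fin k)) (he : ∀ j, (e j).Nonempty)
    (hconn : FinHyperConnected e)
    (c : Fin l → ℝ) (w : Fin k → ℝ) (α β γ δ : ℝ)
    (hc : ∀ j, 0 < c j) (hw : ∀ i, 0 < w i)
    (hα : 0 < α) (hβ : 0 < β) (hγ : 0 < γ) (hδ : 0 < δ)
    (x : Fin k → EuclideanSpace ℝ (Fin d)) (hx : Function.Injective x)
    (R : ℝ) (hR : 0 < R)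
    (hspread : ∃ i j : Fin k, i ≠ j ∧ R ≤ ‖x i - x j‖) :
    α / (2 * (2 * (l : ℝ)) ^ γ)
        * (univ.inf' (univ_nonempty_iff.mpr ⟨⟨0, hl⟩⟩) c) * R ^ γ
      ≤ hyperEnergy e c w α β γ δ x := by
  set z : Fin l → EuclideanSpace ℝ (Fin d) :=
    fun j => ((e j).card : ℝ)⁻¹ • ∑ i' ∈ e j, x i' with hz
  have hl' : (0:ℝ) < 2 * l := by positivity
  set r : ℝ := R / (2 * l) with hrdef
  have hr : 0 < r := div_pos hR hl'
  -- key claim: some point is at distance at least r from its hyperedge centroid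
  have hkey : ∃ j, ∃ i ∈ e j, r ≤ ‖x i - z j‖ := by
    by_contra hcon
    push_neg at hcon
    have hsmall : ∀ j, ∀ i ∈ e j, ∀ i' ∈ e j, ‖x i - x i'‖ < 2 * r := by
      intro j i hi i' hi'
      have h1 := hcon j i hi
      have h2 := hcon j i' hi'
      have htri : ‖x i - x i'‖ ≤ ‖x i - z j‖ + ‖x i' - z j‖ := by
        have := dist_triangle (x i) (z j) (x i')
        rw [dist_eq_norm, dist_eq_norm, dist_eq_norm] at this
        calc ‖x i - x i'‖ ≤ ‖x i - z j‖ + ‖z j - x i'‖ := this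
          _ = ‖x i - z j‖ + ‖x i' - z j‖ := by rw [norm_sub_rev (z j)]
      linarith
    obtain ⟨i0, j0, hne, hRle⟩ := hspread
    have := reach_aux e hconn x r hr hsmall i0 l ∅ {i0} (by simp) (by simp)
      (by simp) (by simp) j0
    rcases this with h | h
    · exact hne h.symm
    · have h2rl : 2 * r * l = R := by
        rw [hrdef]; field_simp
      rw [norm_sub_rev] at h
      linarith
  obtain ⟨j0, i0, hi0, hge⟩ := hkey
  set cmin : ℝ := univ.inf' (univ_nonempty_iff.mpr ⟨⟨0, hl⟩⟩) c with hcmin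
  have hcmin_le : cmin ≤ c j0 := inf'_le _ (mem_univ _)
  have hcmin_pos : 0 < cmin := by
    rw [hcmin, Finset.lt_inf'_iff]
    exact fun j _ => hc j
  -- nonnegativity facts
  have hpow_nonneg : ∀ (j : Fin l) (i : Fin k), (0:ℝ) ≤ ‖x i - z j‖ ^ γ :=
    fun j i => Real.rpow_nonneg (norm_nonneg _) _
  have hterm_nonneg : ∀ j : Fin l, 0 ≤ c j * ∑ i ∈ e j, ‖x i - z j‖ ^ γ :=
    fun j => mul_nonneg (hc j).le (Finset.sum_nonneg fun i _ => hpow_nonneg j i)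
  have h1 : ‖x i0 - z j0‖ ^ γ ≤ ∑ i ∈ e j0, ‖x i - z j0‖ ^ γ :=
    Finset.single_le_sum (fun i _ => hpow_nonneg j0 i) hi0
  have h0 : cmin * r ^ γ ≤ c j0 * ‖x i0 - z j0‖ ^ γ :=
    mul_le_mul hcmin_le (Real.rpow_le_rpow hr.le hge hγ.le)
      (Real.rpow_nonneg hr.le γ) (hc j0).le
  have h2 : c j0 * ∑ i ∈ e j0, ‖x i - z j0‖ ^ γ
      ≤ ∑ j, c j * ∑ i ∈ e j, ‖x i - z j‖ ^ γ :=
    Finset.single_le_sum (fun j _ => hterm_nonneg j) (mem_univ j0)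
  have hrep : 0 ≤ β / 2 * ∑ j : Fin k, ∑ i ∈ univ.erase j, w i * w j / ‖x i - x j‖ ^ δ := by
    apply mul_nonneg (by linarith)
    refine Finset.sum_nonneg fun j _ => Finset.sum_nonneg fun i _ => ?_
    exact div_nonneg (mul_nonneg (hw i).le (hw j).le) (Real.rpow_nonneg (norm_nonneg _) _)
  have hLHS : α / (2 * (2 * (l:ℝ)) ^ γ) * cmin * R ^ γ = α / 2 * (cmin * r ^ γ) := by
    rw [hrdef, Real.div_rpow hR.le hl'.le]
    have hpow_pos : (0:ℝ) < (2 * (l:ℝ)) ^ γ := Real.rpow_pos_of_pos hl' γ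
    field_simp
  rw [hLHS, hyperEnergy]
  have hmain : α / 2 * (cmin * r ^ γ)
      ≤ α / 2 * ∑ j, c j * ∑ i ∈ e j, ‖x i - z j‖ ^ γ := by
    apply mul_le_mul_of_nonneg_left _ (by linarith)
    calc cmin * r ^ γ ≤ c j0 * ‖x i0 - z j0‖ ^ γ := h0
      _ ≤ c j0 * ∑ i ∈ e j0, ‖x i - z j0‖ ^ γ :=
          mul_le_mul_of_nonneg_left h1 (hc j0).le
      _ ≤ _ := h2
  linarith
end

section
/- If the finite weighted hypergraph G is nonempty and connected, then the energy function f attains a global minimum on U; i.e., there exists (x_1*,...,x_k*) ∈ U with f(x_1*,...,x_k*) ≤ f(x_1,...,x_k) for all (x_1,...,x_k) ∈ U. -/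
/-!
The energy is invariant under translations, so a layout may be normalised to have vertex `i₀` at
the origin. On a sublevel set `{f ≤ M}` the attraction term bounds the distance from each vertex
to the barycenter of each of its hyperedges, and connectivity chains these bounds into a uniform
bound on `‖x i‖`; the repulsion term keeps any two vertices at a positive distance `ρ i i'`. So the
normalised low-energy layouts lie in a compact subset of `U`, on which `f` is continuous, and a
minimiser of `f` there is a global minimiser on `U`.
-/

open Finset Function

section General

variable {ι E : Type*}

noncomputable def barycenter [AddCommGroup E] [Module ℝ E] (s : Finset ι) (x : ι → E) : E :=
  (#s : ℝ)⁻¹ • ∑ i ∈ s, x i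

theorem barycenter_sub_const [AddCommGroup E] [Module ℝ E] {s : Finset ι} (hs : s.Nonempty)
    (x : ι → E) (t : E) : barycenter s (fun i => x i - t) = barycenter s x - t := by
  have hcard : (#s : ℝ) ≠ 0 := Nat.cast_ne_zero.mpr hs.card_pos.ne'
  rw [barycenter, barycenter, sum_sub_distrib, sum_const, smul_sub, ← Nat.cast_smul_eq_nsmul ℝ,
    smul_smul, inv_mul_cancel₀ hcard, one_smul]

theorem isCompact_setOf_norm_le_pairwise_le_dist [Finite ι] [NormedAddCommGroup E]
    [ProperSpace E] (R : ℝ) (ρ : ι → ι → ℝ) :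
    IsCompact
      {x : ι → E | (∀ i, ‖x i‖ ≤ R) ∧ Pairwise fun i i' => ρ i i' ≤ dist (x i) (x i')} := by
  have hball : IsCompact (Set.univ.pi fun _ : ι => Metric.closedBall (0 : E) R) :=
    isCompact_univ_pi fun _ => isCompact_closedBall 0 R
  have hsep : IsClosed {x : ι → E | Pairwise fun i i' => ρ i i' ≤ dist (x i) (x i')} := by
    simp only [Pairwise, Set.ofPred_forall]
    exact isClosed_iInter fun i => isClosed_iInter fun i' => isClosed_iInter fun _ =>
      isClosed_le continuous_const ((continuous_apply i).dist (continuous_apply i'))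
  convert hball.inter_right hsep using 1
  ext x
  simp

theorem exists_isMinOn_of_isCompact_sublevel {X : Type*} [TopologicalSpace X] {f : X → ℝ}
    {S K : Set X} {M : ℝ} (hK : IsCompact K) (hKS : K ⊆ S) (hf : ContinuousOn f K)
    (hS : ∃ x ∈ S, f x ≤ M) (hred : ∀ x ∈ S, f x ≤ M → ∃ y ∈ K, f y ≤ f x) :
    ∃ z ∈ S, IsMinOn f S z := by
  obtain ⟨x₀, hx₀S, hx₀M⟩ := hS
  obtain ⟨y₀, hy₀K, hy₀⟩ := hred x₀ hx₀S hx₀M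
  obtain ⟨z, hzK, hz⟩ := hK.exists_isMinOn ⟨y₀, hy₀K⟩ hf
  refine ⟨z, hKS hzK, isMinOn_iff.mpr fun x hxS => ?_⟩
  by_cases hxM : f x ≤ M
  · obtain ⟨y, hyK, hy⟩ := hred x hxS hxM
    exact (isMinOn_iff.mp hz y hyK).trans hy
  · calc f z ≤ f y₀ := isMinOn_iff.mp hz y₀ hy₀K
      _ ≤ M := hy₀.trans hx₀M
      _ ≤ f x := (not_le.mp hxM).le

end General

theorem FinHyperConnected.dist_le_mul {k l : ℕ} {e : Fin l → Finset (Fin k)}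
    {X : Type*} [PseudoMetricSpace X] (hconn : FinHyperConnected e) {x : Fin k → X} {D : ℝ}
    (hD : 0 ≤ D) (hedge : ∀ j, ∀ i ∈ e j, ∀ i' ∈ e j, dist (x i) (x i') ≤ D)
    (i₀ i : Fin k) :
    dist (x i) (x i₀) ≤ D * k := by
  -- Grow a set `S ∋ i₀` of vertices within `D * #S` of `x i₀` by one crossing hyperedge at a time.
  suffices H : ∀ S : Finset (Fin k), #S ≤ k → i₀ ∈ S →
      (∀ i ∈ S, dist (x i) (x i₀) ≤ D * #S) → dist (x i) (x i₀) ≤ D * k from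
    H {i₀} (by simpa using card_le_univ {i₀}) (mem_singleton_self i₀) (by simpa using hD)
  refine strongDownwardInduction fun S ih hSk hi₀ hS => ?_
  by_cases hSuniv : S = univ
  · subst hSuniv
    simpa using hS i (mem_univ i)
  obtain ⟨j, ⟨i₁, hi₁⟩, ⟨i₂, hi₂⟩⟩ := hconn S Sᶜ (union_compl S) disjoint_compl_right
    ⟨i₀, hi₀⟩ (nonempty_iff_ne_empty.mpr fun h => hSuniv ((compl_eq_empty_iff S).mp h))
  rw [mem_inter] at hi₁ hi₂
  have hi₂S : i₂ ∉ S := mem_compl.mp hi₂.2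
  refine ih (by simpa using card_le_univ (insert i₂ S)) (ssubset_insert hi₂S)
    (mem_insert_of_mem hi₀) fun i' hi' => ?_
  rw [card_insert_of_notMem hi₂S, Nat.cast_succ, mul_add_one]
  rcases mem_insert.mp hi' with rfl | hi'
  · calc dist (x i') (x i₀) ≤ dist (x i') (x i₁) + dist (x i₁) (x i₀) := dist_triangle _ _ _
      _ ≤ D + D * #S := add_le_add (hedge j _ hi₂.1 _ hi₁.1) (hS _ hi₁.2)
      _ = D * #S + D := add_comm _ _
  · linarith [hS i' hi']

section Energy

open Real

variable {k l : ℕ} {E : Type*} [NormedAddCommGroup E]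
  {e : Fin l → Finset (Fin k)} {c : Fin l → ℝ} {w : Fin k → ℝ} {γ δ : ℝ}

noncomputable def hyperRepulsion (w : Fin k → ℝ) (δ : ℝ) (x : Fin k → E) : ℝ :=
  ∑ j, ∑ i ∈ univ.erase j, w i * w j / ‖x i - x j‖ ^ δ

theorem hyperRepulsion_nonneg (hw : ∀ i, 0 ≤ w i) (x : Fin k → E) :
    0 ≤ hyperRepulsion w δ x :=
  sum_nonneg fun _ _ => sum_nonneg fun _ _ =>
    div_nonneg (mul_nonneg (hw _) (hw _)) (rpow_nonneg (norm_nonneg _) _)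

theorem div_rpow_le_hyperRepulsion (hw : ∀ i, 0 ≤ w i) (x : Fin k → E) {i i' : Fin k}
    (h : i ≠ i') : w i * w i' / ‖x i - x i'‖ ^ δ ≤ hyperRepulsion w δ x := by
  have hterm : ∀ i j, 0 ≤ w i * w j / ‖x i - x j‖ ^ δ := fun i j =>
    div_nonneg (mul_nonneg (hw i) (hw j)) (rpow_nonneg (norm_nonneg _) _)
  calc w i * w i' / ‖x i - x i'‖ ^ δ
      ≤ ∑ i ∈ univ.erase i', w i * w i' / ‖x i - x i'‖ ^ δ :=
        single_le_sum (fun i _ => hterm i i') (mem_erase.mpr ⟨h, mem_univ i⟩)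
    _ ≤ hyperRepulsion w δ x :=
        single_le_sum (fun j _ => sum_nonneg fun i _ => hterm i j) (mem_univ i')

theorem hyperRepulsion_sub_const (x : Fin k → E) (t : E) :
    hyperRepulsion w δ (fun i => x i - t) = hyperRepulsion w δ x := by
  simp only [hyperRepulsion, sub_sub_sub_cancel_right]

theorem continuousOn_hyperRepulsion :
    ContinuousOn (hyperRepulsion (E := E) w δ) {x | Injective x} := by
  refine continuousOn_finsetSum _ fun j _ => continuousOn_finsetSum _ fun i hi => ?_
  have hpos : ∀ x ∈ {x : Fin k → E | Injective x}, 0 < ‖x i - x j‖ := fun x hx =>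
    norm_pos_iff.mpr (sub_ne_zero.mpr (hx.ne (mem_erase.mp hi).1))
  exact continuousOn_const.div
    (((continuous_apply i).sub (continuous_apply j)).norm.continuousOn.rpow_const
      fun x hx => Or.inl (hpos x hx).ne')
    fun x hx => (rpow_pos_of_pos (hpos x hx) δ).ne'

variable [NormedSpace ℝ E]

noncomputable def hyperAttraction (e : Fin l → Finset (Fin k)) (c : Fin l → ℝ) (γ : ℝ)
    (x : Fin k → E) : ℝ :=
  ∑ j, c j * ∑ i ∈ e j, ‖x i - barycenter (e j) x‖ ^ γ

theorem hyperAttraction_nonneg (hc : ∀ j, 0 ≤ c j) (x : Fin k → E) :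
    0 ≤ hyperAttraction e c γ x :=
  sum_nonneg fun j _ => mul_nonneg (hc j) (sum_nonneg fun _ _ => rpow_nonneg (norm_nonneg _) _)

theorem mul_rpow_le_hyperAttraction (hc : ∀ j, 0 ≤ c j) (x : Fin k → E) {i : Fin k}
    {j : Fin l} (hi : i ∈ e j) :
    c j * ‖x i - barycenter (e j) x‖ ^ γ ≤ hyperAttraction e c γ x := by
  have hterm : ∀ j, 0 ≤ c j * ∑ i ∈ e j, ‖x i - barycenter (e j) x‖ ^ γ := fun j =>
    mul_nonneg (hc j) (sum_nonneg fun _ _ => rpow_nonneg (norm_nonneg _) _)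
  calc c j * ‖x i - barycenter (e j) x‖ ^ γ
      ≤ c j * ∑ i ∈ e j, ‖x i - barycenter (e j) x‖ ^ γ :=
        mul_le_mul_of_nonneg_left
          (single_le_sum (f := fun i => ‖x i - barycenter (e j) x‖ ^ γ)
            (fun _ _ => rpow_nonneg (norm_nonneg _) _) hi) (hc j)
    _ ≤ hyperAttraction e c γ x := single_le_sum (fun j _ => hterm j) (mem_univ j)

theorem hyperAttraction_sub_const (x : Fin k → E) (t : E) :
    hyperAttraction e c γ (fun i => x i - t) = hyperAttraction e c γ x := by
  refine sum_congr rfl fun j _ => congrArg _ (sum_congr rfl fun i hi => ?_)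
  rw [barycenter_sub_const ⟨i, hi⟩, sub_sub_sub_cancel_right]

theorem continuous_hyperAttraction (hγ : 0 ≤ γ) :
    Continuous (hyperAttraction (E := E) e c γ) := by
  unfold hyperAttraction barycenter
  fun_prop (disch := exact hγ)

end Energy

section HyperEnergy

open Real

variable {k l d : ℕ} {e : Fin l → Finset (Fin k)} {c : Fin l → ℝ} {w : Fin k → ℝ}
  {α β γ δ M : ℝ}

theorem hyperEnergy_eq (x : Fin k → EuclideanSpace ℝ (Fin d)) :
    hyperEnergy e c w α β γ δ x =
      α / 2 * hyperAttraction e c γ x + β / 2 * hyperRepulsion w δ x :=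
  rfl

theorem hyperEnergy_nonneg (hc : ∀ j, 0 ≤ c j) (hw : ∀ i, 0 ≤ w i) (hα : 0 ≤ α) (hβ : 0 ≤ β)
    (x : Fin k → EuclideanSpace ℝ (Fin d)) : 0 ≤ hyperEnergy e c w α β γ δ x := by
  rw [hyperEnergy_eq]
  have := hyperAttraction_nonneg (e := e) (γ := γ) hc x
  have := hyperRepulsion_nonneg (δ := δ) hw x
  positivity

theorem hyperEnergy_sub_const (x : Fin k → EuclideanSpace ℝ (Fin d))
    (t : EuclideanSpace ℝ (Fin d)) :
    hyperEnergy e c w α β γ δ (fun i => x i - t) = hyperEnergy e c w α β γ δ x := by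
  rw [hyperEnergy_eq, hyperEnergy_eq, hyperAttraction_sub_const, hyperRepulsion_sub_const]

theorem continuousOn_hyperEnergy (hγ : 0 ≤ γ) :
    ContinuousOn (hyperEnergy (d := d) e c w α β γ δ) {x | Injective x} :=
  (continuousOn_const.mul (continuous_hyperAttraction hγ).continuousOn).add
    (continuousOn_const.mul continuousOn_hyperRepulsion)

theorem norm_sub_barycenter_le_of_hyperEnergy_le (hc : ∀ j, 0 < c j) (hw : ∀ i, 0 ≤ w i)
    (hα : 0 < α) (hβ : 0 ≤ β) (hγ : 0 < γ) {x : Fin k → EuclideanSpace ℝ (Fin d)}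
    (hx : hyperEnergy e c w α β γ δ x ≤ M) {i : Fin k} {j : Fin l} (hi : i ∈ e j) :
    ‖x i - barycenter (e j) x‖ ≤ (2 * M / (α * c j)) ^ γ⁻¹ := by
  have hM : 0 ≤ M := (hyperEnergy_nonneg (fun j => (hc j).le) hw hα.le hβ x).trans hx
  have hterm := mul_rpow_le_hyperAttraction (γ := γ) (fun j => (hc j).le) x hi
  have hrep := hyperRepulsion_nonneg (δ := δ) hw x
  rw [hyperEnergy_eq] at hx
  rw [le_rpow_inv_iff_of_pos (norm_nonneg _) (by have := hc j; positivity) hγ,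
    le_div_iff₀ (mul_pos hα (hc j))]
  nlinarith

theorem dist_le_of_hyperEnergy_le (hc : ∀ j, 0 < c j) (hw : ∀ i, 0 ≤ w i) (hα : 0 < α)
    (hβ : 0 ≤ β) (hγ : 0 < γ) {x : Fin k → EuclideanSpace ℝ (Fin d)}
    (hx : hyperEnergy e c w α β γ δ x ≤ M) {i i' : Fin k} {j : Fin l} (hi : i ∈ e j)
    (hi' : i' ∈ e j) : dist (x i) (x i') ≤ 2 * (2 * M / (α * c j)) ^ γ⁻¹ :=
  calc dist (x i) (x i')
      ≤ dist (x i) (barycenter (e j) x) + dist (x i') (barycenter (e j) x) :=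
        dist_triangle_right _ _ _
    _ ≤ (2 * M / (α * c j)) ^ γ⁻¹ + (2 * M / (α * c j)) ^ γ⁻¹ := by
        rw [dist_eq_norm, dist_eq_norm]
        exact add_le_add (norm_sub_barycenter_le_of_hyperEnergy_le hc hw hα hβ hγ hx hi)
          (norm_sub_barycenter_le_of_hyperEnergy_le hc hw hα hβ hγ hx hi')
    _ = 2 * (2 * M / (α * c j)) ^ γ⁻¹ := (two_mul _).symm

theorem le_dist_of_hyperEnergy_le (hc : ∀ j, 0 ≤ c j) (hw : ∀ i, 0 < w i)
    (hα : 0 ≤ α) (hβ : 0 < β) (hδ : 0 < δ) {x : Fin k → EuclideanSpace ℝ (Fin d)}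
    (hx : hyperEnergy e c w α β γ δ x ≤ M) {i i' : Fin k} (hne : x i ≠ x i') :
    (β * (w i * w i') / (2 * M)) ^ δ⁻¹ ≤ dist (x i) (x i') := by
  have hs : 0 < ‖x i - x i'‖ := norm_pos_iff.mpr (sub_ne_zero.mpr hne)
  have hsδ : 0 < ‖x i - x i'‖ ^ δ := rpow_pos_of_pos hs δ
  have hww : 0 < w i * w i' := mul_pos (hw i) (hw i')
  have hterm := div_rpow_le_hyperRepulsion (δ := δ) (fun i => (hw i).le) x
    (fun h : i = i' => hne (congrArg x h))
  have hatt := hyperAttraction_nonneg (e := e) (γ := γ) hc x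
  rw [hyperEnergy_eq] at hx
  have hM : β / 2 * (w i * w i' / ‖x i - x i'‖ ^ δ) ≤ M := by nlinarith
  have hM0 : 0 < M := lt_of_lt_of_le (by positivity) hM
  rw [dist_eq_norm, rpow_inv_le_iff_of_pos (by positivity) hs.le hδ,
    div_le_iff₀ (by positivity)]
  rw [mul_div_assoc', div_le_iff₀ hsδ] at hM
  linarith

theorem exists_isCompact_hyperEnergy_sublevel (hk : 1 ≤ k) (hconn : FinHyperConnected e)
    (hc : ∀ j, 0 < c j) (hw : ∀ i, 0 < w i) (hα : 0 < α) (hβ : 0 < β) (hγ : 0 < γ)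
    (hδ : 0 < δ) (hM : 0 < M) :
    ∃ K : Set (Fin k → EuclideanSpace ℝ (Fin d)), IsCompact K ∧ K ⊆ {x | Injective x} ∧
      ∀ x : Fin k → EuclideanSpace ℝ (Fin d), Injective x → hyperEnergy e c w α β γ δ x ≤ M →
        ∃ y ∈ K, hyperEnergy e c w α β γ δ y ≤ hyperEnergy e c w α β γ δ x := by
  let i₀ : Fin k := ⟨0, hk⟩
  -- A sum rather than a maximum of the per-edge diameters, as there may be no hyperedges.
  let D := ∑ j, 2 * (2 * M / (α * c j)) ^ γ⁻¹
  let ρ (i i' : Fin k) := (β * (w i * w i') / (2 * M)) ^ δ⁻¹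
  have hρ : ∀ i i', 0 < ρ i i' := fun i i' => by have := hw i; have := hw i'; positivity
  refine ⟨_, isCompact_setOf_norm_le_pairwise_le_dist (D * k) ρ, ?_, fun x hx hxM => ?_⟩
  · rintro x ⟨-, hsep⟩ i i' hxi
    by_contra hii'
    linarith [hρ i i', hsep hii', dist_eq_zero.mpr hxi]
  have hedge : ∀ j, ∀ i ∈ e j, ∀ i' ∈ e j, dist (x i) (x i') ≤ D := fun j i hi i' hi' =>
    (dist_le_of_hyperEnergy_le hc (fun i => (hw i).le) hα hβ.le hγ hxM hi hi').trans
      (single_le_sum (f := fun j => 2 * (2 * M / (α * c j)) ^ γ⁻¹)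
        (fun j _ => by have := hc j; positivity) (mem_univ j))
  refine ⟨fun i => x i - x i₀, ⟨fun i => ?_, fun i i' hii' => ?_⟩,
    (hyperEnergy_sub_const x _).le⟩
  · rw [← dist_eq_norm]
    exact hconn.dist_le_mul (sum_nonneg fun j _ => by have := hc j; positivity) hedge i₀ i
  · simp only [dist_sub_right]
    exact le_dist_of_hyperEnergy_le (fun j => (hc j).le) hw hα.le hβ hδ hxM (hx.ne hii')

end HyperEnergy

theorem hyperEnergy_exists_min_of_connected_general {k l d : ℕ} (hk : 1 ≤ k) (hd : 3 ≤ d)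
    (e : Fin l → Finset (Fin k))
    (hconn : FinHyperConnected e)
    (c : Fin l → ℝ) (w : Fin k → ℝ) (α β γ δ : ℝ)
    (hc : ∀ j, 0 < c j) (hw : ∀ i, 0 < w i)
    (hα : 0 < α) (hβ : 0 < β) (hγ : 0 < γ) (hδ : 0 < δ) :
    ∃ xstar : Fin k → EuclideanSpace ℝ (Fin d), Function.Injective xstar ∧
      ∀ x : Fin k → EuclideanSpace ℝ (Fin d), Function.Injective x →
        hyperEnergy e c w α β γ δ xstar ≤ hyperEnergy e c w α β γ δ x := by
  have : Nonempty (Fin d) := ⟨⟨0, by omega⟩⟩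
  let x₀ : Fin k ↪ EuclideanSpace ℝ (Fin d) := Fin.valEmbedding.trans (Infinite.natEmbedding _)
  set f := hyperEnergy e c w α β γ δ
  have hM : 0 < f x₀ + 1 := add_pos_of_nonneg_of_pos
    (hyperEnergy_nonneg (fun j => (hc j).le) (fun i => (hw i).le) hα.le hβ.le x₀) one_pos
  obtain ⟨K, hK, hKU, hred⟩ :=
    exists_isCompact_hyperEnergy_sublevel hk hconn hc hw hα hβ hγ hδ hM
  obtain ⟨xstar, hxstar, hmin⟩ := exists_isMinOn_of_isCompact_sublevel hK hKU
    ((continuousOn_hyperEnergy hγ.le).mono hKU) ⟨x₀, x₀.injective, (lt_add_one _).le⟩ hred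
  exact ⟨xstar, hxstar, fun x hx => isMinOn_iff.mp hmin x hx⟩

/-- If the finite weighted hypergraph is nonempty and connected, then the energy
function attains a global minimum on `U` (the set of layouts of pairwise distinct
points). -/
theorem hyperEnergy_exists_min_of_connected {k l d : ℕ} (hk : 1 ≤ k) (hd : 3 ≤ d)
    (e : Fin l → Finset (Fin k)) (he : ∀ j, (e j).Nonempty)
    (hconn : FinHyperConnected e)
    (c : Fin l → ℝ) (w : Fin k → ℝ) (α β γ δ : ℝ)
    (hc : ∀ j, 0 < c j) (hw : ∀ i, 0 < w i)
    (hα : 0 < α) (hβ : 0 < β) (hγ : 0 < γ) (hδ : 0 < δ) :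
    ∃ xstar : Fin k → EuclideanSpace ℝ (Fin d), Function.Injective xstar ∧
      ∀ x : Fin k → EuclideanSpace ℝ (Fin d), Function.Injective x →
        hyperEnergy e c w α β γ δ xstar ≤ hyperEnergy e c w α β γ δ x :=
  hyperEnergy_exists_min_of_connected_general hk hd e hconn c w α β γ δ hc hw hα hβ hγ hδ
end

section
/- Let A be an a × a complex matrix in bordered block diagonal form with square diagonal blocks B (size b × b) and C (size c × c) in the upper-left positions, zero blocks between B and C, and an arbitrary border of width d := a − (b + c) ≥ 0 (last d rows and last d columns arbitrary). If det(A) ≠ 0, then b + c − d ≤ rank(B) + rank(C) ≤ b + c. -/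
/-!
Reorder the indices so that `A` becomes a `2 × 2` block matrix whose top-left block is
`fromBlocks B 0 0 C`, of size `b + c`. The top `b + c` rows of the invertible `A` are linearly
independent, so they have rank `b + c`; splitting their columns, this rank is at most
`rank B + rank C` (the block-diagonal part) plus `d` (the border columns).
-/

namespace Matrix

variable {K m n n₁ n₂ : Type*} [Field K]

theorem rank_fromCols_le [Fintype n₁] [Fintype n₂] (A₁ : Matrix m n₁ K) (A₂ : Matrix m n₂ K) :
    (fromCols A₁ A₂).rank ≤ A₁.rank + A₂.rank := by
  have hrange : LinearMap.range (fromCols A₁ A₂).mulVecLin ≤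
      LinearMap.range A₁.mulVecLin ⊔ LinearMap.range A₂.mulVecLin := by
    rintro _ ⟨v, rfl⟩
    rw [mulVecLin_apply, fromCols_mulVec]
    exact Submodule.add_mem_sup ⟨_, rfl⟩ ⟨_, rfl⟩
  exact (Submodule.finrank_mono hrange).trans (Submodule.finrank_add_le_finrank_add_finrank _ _)

theorem rank_fromRows_le [Fintype m] [Fintype n₁] [Fintype n₂] (A₁ : Matrix n₁ m K)
    (A₂ : Matrix n₂ m K) : (fromRows A₁ A₂).rank ≤ A₁.rank + A₂.rank := by
  rw [← rank_transpose, transpose_fromRows, ← rank_transpose A₁, ← rank_transpose A₂]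
  exact rank_fromCols_le _ _

theorem rank_fromBlocks_zero_zero_le [Fintype n₁] [Fintype n₂] (B : Matrix n₁ n₁ K)
    (C : Matrix n₂ n₂ K) : (fromBlocks B 0 0 C).rank ≤ B.rank + C.rank := by
  rw [← fromRows_fromCols_eq_fromBlocks]
  refine (rank_fromRows_le _ _).trans (add_le_add ?_ ?_)
  · simpa using rank_fromCols_le B (0 : Matrix n₁ n₂ K)
  · simpa using rank_fromCols_le (0 : Matrix n₂ n₁ K) C

theorem card_le_rank_toBlocks₁₁_add_card_of_det_ne_zero [Fintype m] [Fintype n] [DecidableEq m]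
    [DecidableEq n] {M : Matrix (m ⊕ n) (m ⊕ n) K} (hM : M.det ≠ 0) :
    Fintype.card m ≤ M.toBlocks₁₁.rank + Fintype.card n := by
  have hrows : LinearIndependent K M.toRows₁.row :=
    (linearIndependent_rows_of_det_ne_zero hM).comp Sum.inl Sum.inl_injective
  calc Fintype.card m = M.toRows₁.rank := hrows.rank_matrix.symm
    _ = (fromCols M.toBlocks₁₁ M.toBlocks₁₂).rank := by congr 1; ext i (j | j) <;> rfl
    _ ≤ M.toBlocks₁₁.rank + M.toBlocks₁₂.rank := rank_fromCols_le _ _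
    _ ≤ M.toBlocks₁₁.rank + Fintype.card n := by gcongr; exact rank_le_card_width _

end Matrix

/-- Rank bound for a nonsingular matrix in bordered block diagonal form: if an
`a × a` matrix `A` (with `a = b + c + d`) has square diagonal blocks `B` (size `b`)
and `C` (size `c`), zero blocks between them, and an arbitrary border of width `d`
(the last `d` rows and columns), and `det A ≠ 0`, then
`b + c − d ≤ rank B + rank C ≤ b + c`. -/
theorem bbd_rank_bound {b c d : ℕ}
    (A : Matrix (Fin b ⊕ Fin c ⊕ Fin d) (Fin b ⊕ Fin c ⊕ Fin d) ℂ)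
    (B : Matrix (Fin b) (Fin b) ℂ) (C : Matrix (Fin c) (Fin c) ℂ)
    (hB : ∀ i j, A (Sum.inl i) (Sum.inl j) = B i j)
    (hC : ∀ i j, A (Sum.inr (Sum.inl i)) (Sum.inr (Sum.inl j)) = C i j)
    (hBC : ∀ i j, A (Sum.inl i) (Sum.inr (Sum.inl j)) = 0)
    (hCB : ∀ i j, A (Sum.inr (Sum.inl i)) (Sum.inl j) = 0)
    (hdet : A.det ≠ 0) :
    b + c ≤ B.rank + C.rank + d ∧ B.rank + C.rank ≤ b + c := by
  set M := A.submatrix (Equiv.sumAssoc _ _ _) (Equiv.sumAssoc _ _ _)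
  have hM : M.det ≠ 0 := by rwa [Matrix.det_submatrix_equiv_self]
  have hblock : M.toBlocks₁₁ = Matrix.fromBlocks B 0 0 C := by
    ext (i | i) (j | j) <;> simp [M, Matrix.toBlocks₁₁, hB, hC, hBC, hCB]
  have hlower := Matrix.card_le_rank_toBlocks₁₁_add_card_of_det_ne_zero hM
  rw [hblock] at hlower
  simp only [Fintype.card_sum, Fintype.card_fin] at hlower
  exact ⟨hlower.trans (by gcongr; exact Matrix.rank_fromBlocks_zero_zero_le B C),
    add_le_add B.rank_le_width C.rank_le_width⟩
end
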